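/- arXiv:1412.5394 — 9 statements merged into one kernel-verified Lean document; each statement's English description precedes it below -/
import Mathlib

section
/- Let p > 3 be a prime. Then 4p · C(2p, p) < C(4p, p). -/
lemma aux_pow (p : ℕ) : ∀ k, 2 ^ k * (2 * p).choose k ≤ (4 * p).choose k := by
  intro k
  induction k with
  | zero => simp
  | succ k ih =>
    rcases le_or_gt (k + 1) (4 * p) with hk | hk
    · have h1 : (4 * p).choose (k + 1) * (k + 1) = (4 * p).choose k * (4 * p - k) :=
        Nat.choose_succ_right_eq _ _
      have h2 : (2 * p).choose (k + 1) * (k + 1) = (2 * p).choose k * (2 * p - k) :=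
        Nat.choose_succ_right_eq _ _
      have hfac : 2 * (2 * p - k) ≤ 4 * p - k := by omega
      have key : 2 ^ (k + 1) * (2 * p).choose (k + 1) * (k + 1) ≤
          (4 * p).choose (k + 1) * (k + 1) := by
        calc 2 ^ (k + 1) * (2 * p).choose (k + 1) * (k + 1)
            = 2 ^ k * ((2 * p).choose k * (2 * (2 * p - k))) := by
              rw [mul_assoc, h2]; ring
          _ ≤ 2 ^ k * ((2 * p).choose k * (4 * p - k)) := by
              gcongr
          _ = (2 ^ k * (2 * p).choose k) * (4 * p - k) := by ring
          _ ≤ (4 * p).choose k * (4 * p - k) := by gcongr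
          _ = (4 * p).choose (k + 1) * (k + 1) := h1.symm
      exact Nat.le_of_mul_le_mul_right key (Nat.succ_pos k)
    · have : (2 * p).choose (k + 1) = 0 := Nat.choose_eq_zero_of_lt (by omega)
      simp [this]

lemma aux_lt : ∀ n, 4 * (n + 5) < 2 ^ (n + 5) := by
  intro n
  induction n with
  | zero => norm_num
  | succ n ih =>
    have h2 : 2 ^ (n + 1 + 5) = 2 ^ (n + 5) + 2 ^ (n + 5) := by ring
    omega

/-- For a prime `p > 3`, `4p · C(2p, p) < C(4p, p)`. -/
theorem stmt4 (p : ℕ) (hp : p.Prime) (h3 : 3 < p) :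
    4 * p * (2 * p).choose p < (4 * p).choose p := by
  have h5 : 5 ≤ p := by
    rcases Nat.lt_or_ge p 5 with h | h
    · interval_cases p <;> first | omega | norm_num at hp
    · exact h
  have hlt : 4 * p < 2 ^ p := by
    have := aux_lt (p - 5); have : 4 * (p - 5 + 5) < 2 ^ (p - 5 + 5) := this
    have he : p - 5 + 5 = p := by omega
    rwa [he] at this
  have hpos : 0 < (2 * p).choose p := Nat.choose_pos (by omega)
  calc 4 * p * (2 * p).choose p < 2 ^ p * (2 * p).choose p := by
        exact Nat.mul_lt_mul_of_lt_of_le hlt (le_refl _) hpos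
    _ ≤ (4 * p).choose p := aux_pow p p
end

section
/- Let p > 3 be a prime and let A_1, ..., A_m ⊆ [4p] with |A_i| = 2p for all i and m ≤ 2p. Then there exists a subset C ⊆ [4p] with |C| = 3p such that |C ∩ A_i| is not divisible by p for every 1 ≤ i ≤ m. -/
/-- `2^k * C(n,k) ≤ C(2n,k)` for `k ≤ n`. -/
lemma choose_double_ge (n : ℕ) : ∀ k, k ≤ n → 2 ^ k * Nat.choose n k ≤ Nat.choose (2 * n) k := by
  intro k
  induction k with
  | zero => simp
  | succ k ih =>
    intro hk
    have hk' : k ≤ n := Nat.le_of_succ_le hk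
    have h1 : Nat.choose n (k + 1) * (k + 1) = Nat.choose n k * (n - k) :=
      Nat.choose_succ_right_eq n k
    have h2 : Nat.choose (2 * n) (k + 1) * (k + 1) = Nat.choose (2 * n) k * (2 * n - k) :=
      Nat.choose_succ_right_eq (2 * n) k
    have key : 2 ^ (k + 1) * Nat.choose n (k + 1) * (k + 1)
        ≤ Nat.choose (2 * n) (k + 1) * (k + 1) := by
      calc 2 ^ (k + 1) * Nat.choose n (k + 1) * (k + 1)
          = 2 ^ (k + 1) * (Nat.choose n (k + 1) * (k + 1)) := by ring
        _ = 2 ^ (k + 1) * (Nat.choose n k * (n - k)) := by rw [h1]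
        _ = (2 ^ k * Nat.choose n k) * (2 * (n - k)) := by ring
        _ ≤ Nat.choose (2 * n) k * (2 * n - k) := by
            apply Nat.mul_le_mul (ih hk')
            omega
        _ = Nat.choose (2 * n) (k + 1) * (k + 1) := h2.symm
    exact Nat.le_of_mul_le_mul_right key (Nat.succ_pos k)

lemma pow_bound : ∀ p : ℕ, 5 ≤ p → 4 * p + 1 ≤ 2 ^ p := by
  intro p hp
  induction p with
  | zero => omega
  | succ n ih =>
    rcases Nat.lt_or_ge n 5 with h | h
    · interval_cases n <;> revert hp <;> decide
    · have := ih (by omega)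
      have : 2 ^ (n + 1) = 2 * 2 ^ n := by ring
      omega

/-- For a prime `p > 3` and at most `2p` subsets `A_1, …, A_m` of `[4p]`, each of size `2p`,
there is a `3p`-element subset `C ⊆ [4p]` with `p ∤ |C ∩ A_i|` for every `i`. -/
theorem stmt6 (p m : ℕ) (hp : p.Prime) (h3 : 3 < p) (hm : m ≤ 2 * p)
    (A : Fin m → Finset (Fin (4 * p))) (hA : ∀ i, (A i).card = 2 * p) :
    ∃ C : Finset (Fin (4 * p)), C.card = 3 * p ∧ ∀ i, ¬ p ∣ (C ∩ A i).card := by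
  classical
  have hpos : 0 < p := by omega
  have hcardfin : Fintype.card (Fin (4 * p)) = 4 * p := Fintype.card_fin _
  -- bad sets of size p
  set bad : Fin m → Finset (Finset (Fin (4 * p))) :=
    fun i => (A i)ᶜ.powersetCard p ∪ (A i).powersetCard p with hbad
  have hcompl : ∀ i, ((A i)ᶜ).card = 2 * p := by
    intro i
    rw [Finset.card_compl, hcardfin, hA i]
    omega
  have hbadcard : ∀ i, (bad i).card ≤ 2 * Nat.choose (2 * p) p := by
    intro i
    calc (bad i).card ≤ ((A i)ᶜ.powersetCard p).card + ((A i).powersetCard p).card :=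
          Finset.card_union_le _ _
      _ = Nat.choose (2 * p) p + Nat.choose (2 * p) p := by
          rw [Finset.card_powersetCard, Finset.card_powersetCard, hA i, hcompl i]
      _ = 2 * Nat.choose (2 * p) p := by ring
  have hunion : (Finset.univ.biUnion bad).card ≤ 2 * p * (2 * Nat.choose (2 * p) p) := by
    calc (Finset.univ.biUnion bad).card ≤ ∑ i : Fin m, (bad i).card :=
          Finset.card_biUnion_le
      _ ≤ ∑ _i : Fin m, 2 * Nat.choose (2 * p) p :=
          Finset.sum_le_sum (fun i _ => hbadcard i)
      _ = m * (2 * Nat.choose (2 * p) p) := by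
          rw [Finset.sum_const, Finset.card_univ, Fintype.card_fin, smul_eq_mul]
      _ ≤ 2 * p * (2 * Nat.choose (2 * p) p) := by
          exact Nat.mul_le_mul_right _ hm
  have hchoose_pos : 0 < Nat.choose (2 * p) p := Nat.choose_pos (by omega)
  have hlt : (Finset.univ.biUnion bad).card
      < ((Finset.univ : Finset (Fin (4 * p))).powersetCard p).card := by
    have hp5 : 5 ≤ p := by
      rcases Nat.lt_or_ge p 5 with h | h
      · exfalso; have : p = 4 := by omega
        rw [this] at hp; norm_num at hp
      · exact h
    have h1 : 4 * p * Nat.choose (2 * p) p < (4 * p + 1) * Nat.choose (2 * p) p :=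
      (Nat.mul_lt_mul_right hchoose_pos).mpr (by omega)
    have heq : 2 * p * (2 * Nat.choose (2 * p) p) = 4 * p * Nat.choose (2 * p) p := by ring
    have h2 : (4 * p + 1) * Nat.choose (2 * p) p ≤ 2 ^ p * Nat.choose (2 * p) p :=
      Nat.mul_le_mul_right _ (pow_bound p hp5)
    have h3' : 2 ^ p * Nat.choose (2 * p) p ≤ Nat.choose (2 * (2 * p)) p :=
      choose_double_ge (2 * p) p (by omega)
    have hpc : ((Finset.univ : Finset (Fin (4 * p))).powersetCard p).card
        = Nat.choose (4 * p) p := by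
      rw [Finset.card_powersetCard, Finset.card_univ, hcardfin]
    rw [hpc]
    have : 2 * (2 * p) = 4 * p := by ring
    rw [this] at h3'
    omega
  have hne : (((Finset.univ : Finset (Fin (4 * p))).powersetCard p) \ Finset.univ.biUnion bad).Nonempty := by
    rw [← Finset.card_pos]
    have := Finset.le_card_sdiff (Finset.univ.biUnion bad) ((Finset.univ : Finset (Fin (4 * p))).powersetCard p)
    omega
  obtain ⟨B, hBsd⟩ := hne
  rw [Finset.mem_sdiff] at hBsd
  obtain ⟨hBmem, hBnot⟩ := hBsd
  rw [Finset.mem_powersetCard] at hBmem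
  have hBcard : B.card = p := hBmem.2
  refine ⟨Bᶜ, ?_, ?_⟩
  · rw [Finset.card_compl, hcardfin, hBcard]; omega
  · intro i
    have hBnoti : B ∉ bad i := fun h => hBnot (Finset.mem_biUnion.mpr ⟨i, Finset.mem_univ i, h⟩)
    rw [hbad, Finset.mem_union, Finset.mem_powersetCard, Finset.mem_powersetCard] at hBnoti
    push_neg at hBnoti
    have hnotc : ¬ B ⊆ (A i)ᶜ := fun h => (hBnoti.1 h) hBcard
    have hnots : ¬ B ⊆ A i := fun h => (hBnoti.2 h) hBcard
    -- 0 < |A i ∩ B| < p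
    have htpos : 0 < (A i ∩ B).card := by
      rw [Finset.card_pos]
      by_contra h
      rw [Finset.not_nonempty_iff_eq_empty] at h
      apply hnotc
      intro x hx
      rw [Finset.mem_compl]
      intro hxA
      have : x ∈ A i ∩ B := Finset.mem_inter.mpr ⟨hxA, hx⟩
      simp [h] at this
    have hle : (A i ∩ B).card ≤ p :=
      le_trans (Finset.card_le_card Finset.inter_subset_right) (le_of_eq hBcard)
    have htlt : (A i ∩ B).card < p := by
      rcases Nat.lt_or_ge (A i ∩ B).card p with h | h
      · exact h
      · exfalso
        have hBA : (B ∩ A i).card = B.card := by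
          rw [Finset.inter_comm]; omega
        have heq : B ∩ A i = B :=
          Finset.eq_of_subset_of_card_le Finset.inter_subset_left (by omega)
        exact hnots (by rw [← heq]; exact Finset.inter_subset_right)
    -- |Bᶜ ∩ A i| = |A i \ B| and |A i ∩ B| + |A i \ B| = 2p
    have hinter : Bᶜ ∩ A i = A i \ B := by
      ext x
      simp [Finset.mem_sdiff, Finset.mem_inter, Finset.mem_compl]
      tauto
    have hsum : (A i ∩ B).card + (A i \ B).card = 2 * p := by
      rw [Finset.card_inter_add_card_sdiff, hA i]
    intro hdvd
    rw [hinter] at hdvd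
    obtain ⟨c, hc⟩ := hdvd
    rcases Nat.lt_or_ge c 2 with h | h
    · interval_cases c <;> omega
    · have : p * 2 ≤ p * c := Nat.mul_le_mul_left p h
      omega
end

section
/- Let F be a field, ≺ a degree-compatible term order on monomials of F[x_1,...,x_n], P ∈ F[x_1,...,x_n], F a finite subset of F^n, and h ∈ F^n \ F. Set T := F ∪ {h}. Suppose P(h) ≠ 0 and P vanishes on F. Let y be the unique monomial in Sm(≺, T) \ Sm(≺, F) (standard monomials of the vanishing ideals). Then deg(P) ≥ deg(y). -/
open MvPolynomial

/-- The set of polynomials vanishing on `S` (the vanishing ideal, as a set). -/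
def vanishingOn {σ F : Type*} [CommSemiring F] (S : Set (σ → F)) :
    Set (MvPolynomial σ F) :=
  {f | ∀ x ∈ S, MvPolynomial.eval x f = 0}

/-- `u` is the leading monomial of `f` with respect to the term order `m`. -/
def IsLeadingMonomial {σ F : Type*} [CommSemiring F] (m : MonomialOrder σ)
    (f : MvPolynomial σ F) (u : σ →₀ ℕ) : Prop :=
  u ∈ f.support ∧ ∀ v ∈ f.support, m.toSyn v ≤ m.toSyn u

/-- `u` is a standard monomial of the vanishing ideal of `S` with respect to `m`. -/
def IsStandard {σ F : Type*} [CommSemiring F] (m : MonomialOrder σ)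
    (S : Set (σ → F)) (u : σ →₀ ℕ) : Prop :=
  ¬ ∃ f ∈ vanishingOn S, IsLeadingMonomial m f u

/-- `m` is a degree-compatible term order. -/
def DegCompatible {σ : Type*} (m : MonomialOrder σ) : Prop :=
  ∀ u v : σ →₀ ℕ, u.degree < v.degree → m.toSyn u < m.toSyn v

/-! If `deg P < deg y` while `y` is the leading monomial of some `f ∈ I(S)`, then
`f - (f(h) / P(h)) • P` still has leading monomial `y`, since every monomial of `P` lies below `y`
in a degree-compatible order, and it vanishes on `S ∪ {h}`: so `y` is not standard for
`S ∪ {h}`. -/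

section

variable {σ F : Type*}

theorem IsLeadingMonomial.sub [CommRing F] {m : MonomialOrder σ} {f g : MvPolynomial σ F}
    {u : σ →₀ ℕ} (hf : IsLeadingMonomial m f u)
    (hg : ∀ v ∈ g.support, m.toSyn v < m.toSyn u) : IsLeadingMonomial m (f - g) u := by
  classical
  have hgu : coeff u g = 0 := notMem_support_iff.mp fun hu => lt_irrefl _ (hg u hu)
  refine ⟨by simpa [hgu] using hf.1, fun v hv => ?_⟩
  rcases Finset.mem_union.mp (support_sub σ f g hv) with hvf | hvg
  · exact hf.2 v hvf
  · exact (hg v hvg).le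

theorem DegCompatible.toSyn_lt_of_totalDegree_lt [CommSemiring F] {m : MonomialOrder σ}
    (hm : DegCompatible m) {P : MvPolynomial σ F} {u : σ →₀ ℕ} (hP : P.totalDegree < u.degree) :
    ∀ v ∈ P.support, m.toSyn v < m.toSyn u := fun v hv =>
  hm v u ((le_totalDegree hv).trans_lt hP)

theorem sub_smul_mem_vanishingOn_union_singleton [Field F] {S : Set (σ → F)}
    {f P : MvPolynomial σ F} (hf : f ∈ vanishingOn S) (hP : P ∈ vanishingOn S) {h : σ → F}
    (hPh : eval h P ≠ 0) : f - (eval h f / eval h P) • P ∈ vanishingOn (S ∪ {h}) := by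
  rintro x (hx | rfl)
  · simp [hf x hx, hP x hx]
  · simp [div_mul_cancel₀ _ hPh]

end

theorem stmt9_general {n : ℕ} {F : Type*} [Field F]
    (m : MonomialOrder (Fin n)) (hm : DegCompatible m)
    (P : MvPolynomial (Fin n) F)
    (S : Set (Fin n → F)) (h : Fin n → F)
    (hPh : eval h P ≠ 0) (hPS : ∀ x ∈ S, eval x P = 0)
    (y : Fin n →₀ ℕ)
    (hy : IsStandard m (S ∪ {h}) y) (hy' : ¬ IsStandard m S y) :
    y.degree ≤ P.totalDegree := by
  by_contra! hlt
  obtain ⟨f, hfS, hfy⟩ := not_not.mp hy'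
  exact hy ⟨_, sub_smul_mem_vanishingOn_union_singleton hfS hPS hPh,
    hfy.sub fun v hv => hm.toSyn_lt_of_totalDegree_lt hlt v (support_smul hv)⟩

/-- If `P` vanishes on a finite set `S` but not at `h ∉ S`, and `y` is the unique standard
monomial of `I(S ∪ {h})` which is not a standard monomial of `I(S)` (w.r.t. a
degree-compatible term order), then `deg P ≥ deg y`. -/
theorem stmt9 {n : ℕ} {F : Type*} [Field F]
    (m : MonomialOrder (Fin n)) (hm : DegCompatible m)
    (P : MvPolynomial (Fin n) F)
    (S : Set (Fin n → F)) (hS : S.Finite) (h : Fin n → F) (hh : h ∉ S)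
    (hPh : eval h P ≠ 0) (hPS : ∀ x ∈ S, eval x P = 0)
    (y : Fin n →₀ ℕ)
    (hy : IsStandard m (S ∪ {h}) y) (hy' : ¬ IsStandard m S y) :
    y.degree ≤ P.totalDegree :=
  stmt9_general m hm P S h hPh hPS y hy hy'
end

section
/- Let F be a field, ≺ a term order, F ⊆ F^n finite, h ∉ F, and let G = {g_1,...,g_s} be the reduced Gröbner basis of I(F) with lm(g_1) ≺ ... ≺ lm(g_s). Let i be the minimal index with g_i(h) ≠ 0. Then Sm(≺, F ∪ {h}) = Sm(≺, F) ∪ {lm(g_i)}. -/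
open MvPolynomial

/-!
Division by the Gröbner basis leaves remainder zero on `I(S)`, so every `f ∈ I(S)` is a
combination `∑ c_j g_j` with `lm(c_j g_j) ⪯ lm(f)`. If `lm(f) ≺ lm(g_i)`, only the `g_j` with
`j < i` occur, and they vanish at `h`; hence `f(h) = 0`. Applied to the S-polynomial of `g_i` and
some `f ∈ I(S ∪ {h})` with `lm(f) = lm(g_i)`, this contradicts `g_i(h) ≠ 0`, so `lm(g_i)` stays
standard. Conversely, a non-standard `u` is the leading monomial of some `w · g_j ∈ I(S)`; if this
does not vanish at `h` then `j ≥ i`, so `lm(g_i) ≺ u` when `u ≠ lm(g_i)`, and subtracting a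
multiple of `g_i` gives an element of `I(S ∪ {h})` with leading monomial `u`.
-/

open MonomialOrder
open scoped MonomialOrder

section Standard

variable {σ : Type*} {m : MonomialOrder σ}

theorem isLeadingMonomial_iff {R : Type*} [CommSemiring R] {f : MvPolynomial σ R}
    {u : σ →₀ ℕ} : IsLeadingMonomial m f u ↔ f ≠ 0 ∧ m.degree f = u := by
  constructor
  · rintro ⟨hu, hmax⟩
    have hf0 : f ≠ 0 := by rintro rfl; simp at hu
    exact ⟨hf0, m.toSyn.injective <|
      le_antisymm (hmax _ (m.degree_mem_support hf0)) (m.le_degree hu)⟩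
  · rintro ⟨hf0, rfl⟩
    exact ⟨m.degree_mem_support hf0, fun v hv => m.le_degree hv⟩

variable {R : Type*} [CommSemiring R] {S T : Set (σ → R)}

theorem mem_vanishingOn_union_singleton {x : σ → R} {f : MvPolynomial σ R} :
    f ∈ vanishingOn (S ∪ {x}) ↔ f ∈ vanishingOn S ∧ eval x f = 0 := by
  simp [vanishingOn, or_imp, forall_and, and_comm]

theorem IsStandard.mono (hST : S ⊆ T) {u : σ →₀ ℕ} (hu : IsStandard m S u) :
    IsStandard m T u :=
  fun ⟨f, hf, hfu⟩ => hu ⟨f, fun x hx => hf x (hST hx), hfu⟩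

theorem not_isStandard_iff {u : σ →₀ ℕ} :
    ¬ IsStandard m S u ↔ ∃ f ∈ vanishingOn S, f ≠ 0 ∧ m.degree f = u := by
  simp only [IsStandard, not_not, isLeadingMonomial_iff]

theorem not_isStandard_degree {f : MvPolynomial σ R} (hf : f ∈ vanishingOn S) (hf0 : f ≠ 0) :
    ¬ IsStandard m S (m.degree f) :=
  not_isStandard_iff.2 ⟨f, hf, hf0, rfl⟩

end Standard

section Field

variable {σ F : Type*} [Field F] {m : MonomialOrder σ} {S : Set (σ → F)}

theorem not_isStandard_union_singleton_of_degree_lt {x : σ → F} {p q : MvPolynomial σ F}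
    (hp : p ∈ vanishingOn S) (hq : q ∈ vanishingOn S) (hqx : eval x q ≠ 0)
    (hlt : m.degree q ≺[m] m.degree p) :
    ¬ IsStandard m (S ∪ {x}) (m.degree p) := by
  set a := eval x p / eval x q
  have hlt' : m.degree (a • q) ≺[m] m.degree p := lt_of_le_of_lt m.degree_smul_le hlt
  have hp0 : p ≠ 0 := by
    rintro rfl
    simp only [degree_zero, map_zero] at hlt
    exact not_lt.2 (m.zero_le _) hlt
  have hne : p - a • q ≠ 0 := by
    rw [← m.leadingCoeff_ne_zero_iff, m.leadingCoeff_sub_of_lt hlt', m.leadingCoeff_ne_zero_iff]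
    exact hp0
  rw [← m.degree_sub_of_lt hlt']
  refine not_isStandard_degree (mem_vanishingOn_union_singleton.2 ⟨?_, ?_⟩) hne
  · exact fun y hy => by simp [hp y hy, hq y hy]
  · simp [a, hqx]

variable {ι : Type*} (g : ι → MvPolynomial σ F)

theorem exists_linearCombination_of_mem_vanishingOn (hg0 : ∀ j, g j ≠ 0)
    (hmem : ∀ j, g j ∈ vanishingOn S)
    (hGB : ∀ f ∈ vanishingOn S, f ≠ 0 → ∃ j, m.degree (g j) ≤ m.degree f)
    {f : MvPolynomial σ F} (hf : f ∈ vanishingOn S) :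
    ∃ c : ι →₀ MvPolynomial σ F, f = Finsupp.linearCombination _ g c ∧
      ∀ j, m.degree (g j * c j) ≼[m] m.degree f := by
  obtain ⟨c, r, hfr, hdeg, hr⟩ := m.div (fun j => m.isUnit_leadingCoeff.2 (hg0 j)) f
  refine ⟨c, ?_, hdeg⟩
  suffices hr0 : r = 0 by rw [hfr, hr0, add_zero]
  have hrS : r ∈ vanishingOn S := fun x hx => by
    rw [eq_sub_of_add_eq' hfr.symm, map_sub, hf x hx, Finsupp.linearCombination_apply,
      Finsupp.sum, map_sum]
    simp [hmem _ x hx]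
  by_contra hr0
  obtain ⟨j, hj⟩ := hGB r hrS hr0
  exact hr _ (m.degree_mem_support hr0) j hj

theorem eval_eq_zero_of_degree_lt (hg0 : ∀ j, g j ≠ 0) (hmem : ∀ j, g j ∈ vanishingOn S)
    (hGB : ∀ f ∈ vanishingOn S, f ≠ 0 → ∃ j, m.degree (g j) ≤ m.degree f)
    {x : σ → F} {i : ι} (hmin : ∀ j, m.degree (g j) ≺[m] m.degree (g i) → eval x (g j) = 0)
    {p : MvPolynomial σ F} (hp : p ∈ vanishingOn S) (hlt : m.degree p ≺[m] m.degree (g i)) :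
    eval x p = 0 := by
  obtain ⟨c, rfl, hdeg⟩ := exists_linearCombination_of_mem_vanishingOn g hg0 hmem hGB hp
  rw [Finsupp.linearCombination_apply, Finsupp.sum, map_sum]
  refine Finset.sum_eq_zero fun j hj => ?_
  have hcj : c j ≠ 0 := Finsupp.mem_support_iff.1 hj
  have hji : m.degree (g j) ≺[m] m.degree (g i) := calc
    m.toSyn (m.degree (g j)) ≤ m.toSyn (m.degree (g j * c j)) := by
      rw [m.degree_mul (hg0 j) hcj]
      exact m.toSyn_monotone le_self_add
    _ ≤ _ := hdeg j
    _ < _ := hlt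
  simp [hmin j hji]

theorem isStandard_union_singleton_degree (hg0 : ∀ j, g j ≠ 0)
    (hmem : ∀ j, g j ∈ vanishingOn S)
    (hGB : ∀ f ∈ vanishingOn S, f ≠ 0 → ∃ j, m.degree (g j) ≤ m.degree f)
    {x : σ → F} {i : ι} (hi : eval x (g i) ≠ 0)
    (hmin : ∀ j, m.degree (g j) ≺[m] m.degree (g i) → eval x (g j) = 0) :
    IsStandard m (S ∪ {x}) (m.degree (g i)) := by
  rintro ⟨f, hf, hflm⟩
  obtain ⟨hf0, hfdeg⟩ := isLeadingMonomial_iff.1 hflm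
  obtain ⟨hfS, hfx⟩ := mem_vanishingOn_union_singleton.1 hf
  set r := m.sPolynomial f (g i)
  have hr : eval x r = - (m.leadingCoeff f * eval x (g i)) := by
    simp [r, sPolynomial, hfdeg, hfx]
  have hr0 : eval x r = 0 := by
    by_cases hr0 : r = 0
    · rw [hr0, map_zero]
    refine eval_eq_zero_of_degree_lt g hg0 hmem hGB hmin (fun y hy => ?_) ?_
    · simp [r, sPolynomial, hfS y hy, hmem i y hy]
    · rw [← hfdeg]
      exact m.sPolynomial_lt_of_degree_ne_zero_of_degree_eq hfdeg hr0
  rw [hr, neg_eq_zero, mul_eq_zero, m.leadingCoeff_eq_zero_iff] at hr0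
  exact hr0.elim hf0 hi

theorem not_isStandard_union_singleton (hg0 : ∀ j, g j ≠ 0)
    (hmem : ∀ j, g j ∈ vanishingOn S)
    (hGB : ∀ f ∈ vanishingOn S, f ≠ 0 → ∃ j, m.degree (g j) ≤ m.degree f)
    {x : σ → F} {i : ι} (hi : eval x (g i) ≠ 0)
    (hmin : ∀ j, m.degree (g j) ≺[m] m.degree (g i) → eval x (g j) = 0)
    {u : σ →₀ ℕ} (hu : ¬ IsStandard m S u) (hui : u ≠ m.degree (g i)) :
    ¬ IsStandard m (S ∪ {x}) u := by
  obtain ⟨f, hfS, hf0, rfl⟩ := not_isStandard_iff.1 hu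
  obtain ⟨j, hj⟩ := hGB f hfS hf0
  set p := monomial (m.degree f - m.degree (g j)) (1 : F) * g j
  have hmono0 : monomial (m.degree f - m.degree (g j)) (1 : F) ≠ 0 := by simp
  have hp0 : p ≠ 0 := mul_ne_zero hmono0 (hg0 j)
  have hpdeg : m.degree p = m.degree f := by
    classical
    rw [m.degree_mul hmono0 (hg0 j), m.degree_monomial, if_neg one_ne_zero,
      tsub_add_cancel_of_le hj]
  have hpS : p ∈ vanishingOn S := fun y hy => by simp [p, hmem j y hy]
  rw [← hpdeg]
  by_cases hpx : eval x p = 0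
  · exact not_isStandard_degree (mem_vanishingOn_union_singleton.2 ⟨hpS, hpx⟩) hp0
  have hgj : eval x (g j) ≠ 0 := fun hgj => hpx (by simp [p, hgj])
  have hij : m.degree (g i) ≼[m] m.degree (g j) := not_lt.1 (mt (hmin j) hgj)
  have hlt : m.degree (g i) ≺[m] m.degree p := by
    refine lt_of_le_of_ne (hij.trans (hpdeg ▸ m.toSyn_monotone hj)) fun heq => hui ?_
    rw [← hpdeg, m.toSyn.injective heq]
  exact not_isStandard_union_singleton_of_degree_lt hpS (hmem i) hi hlt

end Field

theorem stmt10_general {n s : ℕ} {F : Type*} [Field F]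
    (m : MonomialOrder (Fin n))
    (S : Set (Fin n → F)) (h : Fin n → F)
    (g : Fin s → MvPolynomial (Fin n) F) (lmg : Fin s → (Fin n →₀ ℕ))
    (hlm : ∀ j, IsLeadingMonomial m (g j) (lmg j))
    (hmem : ∀ j, g j ∈ vanishingOn S)
    -- Gröbner basis property: the leading monomial of every nonzero element of `I(S)` is
    -- divisible by some `lm(g_j)`.
    (hGB : ∀ f ∈ vanishingOn S, f ≠ 0 →
      ∀ u, IsLeadingMonomial m f u → ∃ j w, u = lmg j + w)
    (hsorted : ∀ j j' : Fin s, j < j' → m.toSyn (lmg j) < m.toSyn (lmg j'))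
    (i : Fin s) (hi : eval h (g i) ≠ 0) (hmin : ∀ j, j < i → eval h (g j) = 0) :
    ∀ u : Fin n →₀ ℕ,
      IsStandard m (S ∪ {h}) u ↔ (IsStandard m S u ∨ u = lmg i) := by
  have hg0 : ∀ j, g j ≠ 0 := fun j => (isLeadingMonomial_iff.1 (hlm j)).1
  obtain rfl : lmg = fun j => m.degree (g j) :=
    funext fun j => (isLeadingMonomial_iff.1 (hlm j)).2.symm
  have hGB' : ∀ f ∈ vanishingOn S, f ≠ 0 → ∃ j, m.degree (g j) ≤ m.degree f := by
    intro f hf hf0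
    obtain ⟨j, w, hw⟩ := hGB f hf hf0 _ (isLeadingMonomial_iff.2 ⟨hf0, rfl⟩)
    exact ⟨j, hw ▸ le_self_add⟩
  have hmin' : ∀ j, m.degree (g j) ≺[m] m.degree (g i) → eval h (g j) = 0 :=
    fun j hj => hmin j ((StrictMono.lt_iff_lt hsorted).1 hj)
  intro u
  constructor
  · intro hu
    by_contra! hne
    exact not_isStandard_union_singleton g hg0 hmem hGB' hi hmin' hne.1 hne.2 hu
  · rintro (hu | rfl)
    · exact hu.mono Set.subset_union_left
    · exact isStandard_union_singleton_degree g hg0 hmem hGB' hi hmin'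

/-- If `G = {g_1, …, g_s}` is the reduced Gröbner basis of `I(S)` with
`lm(g_1) ≺ … ≺ lm(g_s)`, `h ∉ S`, and `i` is minimal with `g_i(h) ≠ 0`, then
`Sm(≺, S ∪ {h}) = Sm(≺, S) ∪ {lm(g_i)}`. -/
theorem stmt10 {n s : ℕ} {F : Type*} [Field F]
    (m : MonomialOrder (Fin n))
    (S : Set (Fin n → F)) (hS : S.Finite) (h : Fin n → F) (hh : h ∉ S)
    (g : Fin s → MvPolynomial (Fin n) F) (lmg : Fin s → (Fin n →₀ ℕ))
    (hlm : ∀ j, IsLeadingMonomial m (g j) (lmg j))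
    (hmem : ∀ j, g j ∈ vanishingOn S)
    -- Gröbner basis property: the leading monomial of every nonzero element of `I(S)` is
    -- divisible by some `lm(g_j)`.
    (hGB : ∀ f ∈ vanishingOn S, f ≠ 0 →
      ∀ u, IsLeadingMonomial m f u → ∃ j w, u = lmg j + w)
    -- reduced: monic and no monomial of `g_j` is divisible by `lm(g_{j'})` for `j' ≠ j`.
    (hmonic : ∀ j, coeff (lmg j) (g j) = 1)
    (hred : ∀ j j' : Fin s, j ≠ j' → ∀ u ∈ (g j).support, ¬ ∃ w, u = lmg j' + w)
    (hsorted : ∀ j j' : Fin s, j < j' → m.toSyn (lmg j) < m.toSyn (lmg j'))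
    (i : Fin s) (hi : eval h (g i) ≠ 0) (hmin : ∀ j, j < i → eval h (g j) = 0) :
    ∀ u : Fin n →₀ ℕ,
      IsStandard m (S ∪ {h}) u ↔ (IsStandard m S u ∨ u = lmg i) :=
  stmt10_general m S h g lmg hlm hmem hGB hsorted i hi hmin
end

section
/- Let p be a prime dividing n and let λ_1, ..., λ_p be nonnegative integers with λ_1 + ... + λ_p = n and Σ_{j=1}^{p-1} (p-j)λ_j < n(p-1)/p. Then for every 1 ≤ i ≤ p-1, the inequality (p-i)(λ_1 + ... + λ_i) < i(λ_{i+1} + ... + λ_p) holds. -/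
/-- The key arithmetic inequality: if `λ_1 + … + λ_p = n` and
`∑_{j=1}^{p-1} (p-j) λ_j < n(p-1)/p`, then for every `1 ≤ i ≤ p-1` we have
`(p-i)(λ_1 + … + λ_i) < i(λ_{i+1} + … + λ_p)`.
(Here `lam ⟨j-1,_⟩` plays the role of `λ_j`.) -/
theorem stmt13 (p n : ℕ) (hp : p.Prime) (hpn : p ∣ n) (hn : 0 < n)
    (lam : Fin p → ℕ) (hsum : ∑ j, lam j = n)
    (hdeg : p * (∑ j : Fin p, (p - 1 - (j : ℕ)) * lam j) < n * (p - 1)) :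
    ∀ i : ℕ, 1 ≤ i → i ≤ p - 1 →
      (p - i) * (∑ j ∈ Finset.univ.filter (fun j : Fin p => (j : ℕ) < i), lam j)
        < i * (∑ j ∈ Finset.univ.filter (fun j : Fin p => i ≤ (j : ℕ)), lam j) := by
  intro i hi1 hi2
  obtain ⟨m, hm⟩ := hpn
  have hp2 : 2 ≤ p := hp.two_le
  by_contra hcon
  push_neg at hcon
  set A := ∑ j ∈ Finset.univ.filter (fun j : Fin p => (j : ℕ) < i), lam j with hA
  set B := ∑ j ∈ Finset.univ.filter (fun j : Fin p => i ≤ (j : ℕ)), lam j with hB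
  have hip : i ≤ p := le_trans hi2 (Nat.sub_le p 1)
  have hAB : A + B = n := by
    rw [← hsum, hA, hB,
      ← Finset.sum_filter_add_sum_filter_not Finset.univ (fun j : Fin p => (j : ℕ) < i)]
    congr 1
    apply Finset.sum_congr _ (fun _ _ => rfl)
    ext j; simp [not_lt]
  -- from the contradiction hypothesis, p * A ≥ i * n
  have hpA : p * (i * m) ≤ p * A := by
    calc p * (i * m) = i * n := by rw [hm]; ring
    _ = i * A + i * B := by rw [← hAB]; ring
    _ ≤ i * A + (p - i) * A := by gcongr
    _ = (i + (p - i)) * A := by ring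
    _ = p * A := by rw [Nat.add_sub_cancel' hip]
  have hAm : i * m ≤ A := Nat.le_of_mul_le_mul_left hpA (by omega)
  -- partial sums
  set S : ℕ → ℕ := fun k => ∑ j ∈ Finset.univ.filter (fun j : Fin p => (j : ℕ) ≤ k), lam j
    with hS
  have hswap : ∑ k ∈ Finset.range (p - 1), S k = ∑ j : Fin p, (p - 1 - (j : ℕ)) * lam j := by
    simp only [hS, Finset.sum_filter]
    rw [Finset.sum_comm]
    refine Finset.sum_congr rfl fun j _ => ?_
    rw [← Finset.sum_filter, Finset.sum_const, smul_eq_mul]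
    have hfil : (Finset.range (p - 1)).filter (fun k => (j : ℕ) ≤ k)
        = Finset.Ico (j : ℕ) (p - 1) := by
      ext k; simp; omega
    rw [hfil, Nat.card_Ico]
  have hSk : ∀ k, i - 1 ≤ k → A ≤ S k := by
    intro k hk
    apply Finset.sum_le_sum_of_subset
    intro j hj
    simp only [Finset.mem_filter, Finset.mem_univ, true_and] at hj ⊢
    omega
  have hlower : (p - i) * A ≤ ∑ k ∈ Finset.range (p - 1), S k := by
    have hfil : (Finset.range (p - 1)).filter (fun k => i - 1 ≤ k)
        = Finset.Ico (i - 1) (p - 1) := by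
      ext k; simp; omega
    calc (p - i) * A
        = ∑ _k ∈ (Finset.range (p - 1)).filter (fun k => i - 1 ≤ k), A := by
          rw [Finset.sum_const, smul_eq_mul, hfil, Nat.card_Ico]
          congr 1; omega
      _ ≤ ∑ k ∈ (Finset.range (p - 1)).filter (fun k => i - 1 ≤ k), S k :=
          Finset.sum_le_sum (fun k hk => hSk k (Finset.mem_filter.mp hk).2)
      _ ≤ ∑ k ∈ Finset.range (p - 1), S k :=
          Finset.sum_le_sum_of_subset (Finset.filter_subset _ _)
  rw [← hswap, hm] at hdeg
  have hsum_lt : ∑ k ∈ Finset.range (p - 1), S k < m * (p - 1) := by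
    have : p * (∑ k ∈ Finset.range (p - 1), S k) < p * (m * (p - 1)) := by
      calc p * (∑ k ∈ Finset.range (p - 1), S k) < p * m * (p - 1) := hdeg
      _ = p * (m * (p - 1)) := by ring
    exact Nat.lt_of_mul_lt_mul_left this
  -- (p - i) * (i * m) ≥ (p - 1) * m
  have hq : (p - i) + i = p := Nat.sub_add_cancel hip
  have hkey : (p - 1) * m ≤ (p - i) * (i * m) := by
    have h1 : p - 1 ≤ (p - i) * i := by
      have h2 : 1 ≤ p - i := by omega
      calc p - 1 = (p - i) + (i - 1) := by omega
      _ ≤ (p - i) + (p - i) * (i - 1) := by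
          gcongr
          exact Nat.le_mul_of_pos_left _ h2
      _ = (p - i) * (i - 1 + 1) := by rw [Nat.mul_add, Nat.mul_one, Nat.add_comm]
      _ = (p - i) * i := by congr 1; omega
    calc (p - 1) * m ≤ ((p - i) * i) * m := by gcongr
    _ = (p - i) * (i * m) := by ring
  have hfin : m * (p - 1) ≤ ∑ k ∈ Finset.range (p - 1), S k := by
    calc m * (p - 1) = (p - 1) * m := mul_comm _ _
    _ ≤ (p - i) * (i * m) := hkey
    _ ≤ (p - i) * A := by gcongr
    _ ≤ ∑ k ∈ Finset.range (p - 1), S k := hlower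
  exact absurd hsum_lt (not_lt.mpr hfin)
end

section
/- Let p be a prime dividing n, ω = e^{2πi/p}, and B_t = {x ∈ {1,ω,...,ω^{p-1}}^n : x_1⋯x_n = ω^t} for 0 ≤ t ≤ p-1. For any degree-compatible term order ≺, every monomial x_1^{u_1}⋯x_n^{u_n} with 0 ≤ u_i ≤ p-1 and u_1+...+u_n < n(p-1)/p is a standard monomial of the vanishing ideal I(B_t) ⊆ ℂ[x_1,...,x_n]. -/
open MvPolynomial

/-!
Suppose `f` vanishes on `B_t` and has leading monomial `u`, and apply to `f` the functional
`g ↦ ∑_{x ∈ B_t} x^{-u} g(x)`. Writing the points of `B_t` as `x = ω^a` with `a ∈ (ℤ/p)^n`,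
`∑ aᵢ = t`, a monomial `x^v` is sent to a character sum over an affine hyperplane, which vanishes
unless `v - u` is constant mod `p`. Every monomial `v` of `f` has `deg v ≤ deg u` by degree
compatibility, and since `uᵢ < p` and `p deg u < n(p-1)`, a shift `v ≡ u + k` with `k ≢ 0` would
have larger degree than `u`. So only `v = u` contributes, and the functional takes the value
`coeff_u f · |B_t| ≠ 0` at `f`, contradicting `f = 0` on `B_t`.
-/

open Finset Matrix

namespace AddChar

lemma map_sum_eq_prod {A R ι : Type*} [AddCommMonoid A] [CommMonoid R] (ψ : AddChar A R)
    (s : Finset ι) (f : ι → A) : ψ (∑ i ∈ s, f i) = ∏ i ∈ s, ψ (f i) :=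
  map_prod ψ.toMonoidHom (fun i => Multiplicative.ofAdd (f i)) s

lemma sum_eq_zero_of_add_mem_iff {A R : Type*} [AddGroup A] [CommRing R] [IsDomain R]
    (ψ : AddChar A R) {s : Finset A} {g : A} (hs : ∀ a, a + g ∈ s ↔ a ∈ s) (hg : ψ g ≠ 1) :
    ∑ a ∈ s, ψ a = 0 := by
  have hshift : ∑ a ∈ s, ψ (a + g) = ∑ a ∈ s, ψ a :=
    Finset.sum_equiv (Equiv.addRight g) (fun a => (hs a).symm) (fun _ _ => rfl)
  simp_rw [map_add_eq_mul, ← Finset.sum_mul] at hshift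
  exact eq_zero_of_mul_eq_self_right hg hshift

/-- The hyperplane `∑ aₗ = T` is invariant under `a ↦ a + c (eᵢ - eⱼ)`, which multiplies
`ψ (w ⬝ᵥ a)` by `ψ (c (wᵢ - wⱼ))`, and `c` can be chosen to make this factor `≠ 1`. -/
lemma sum_hyperplane_dotProduct_eq_zero {K R ι : Type*} [Field K] [Fintype K] [DecidableEq K]
    [CommRing R] [IsDomain R] [Fintype ι] [DecidableEq ι] {ψ : AddChar K R} (hψ : ψ ≠ 1)
    {w : ι → K} {i j : ι} (hij : w i ≠ w j) (T : K) :
    ∑ a ∈ univ.filter (fun a : ι → K => ∑ l, a l = T), ψ (w ⬝ᵥ a) = 0 := by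
  obtain ⟨x, hx⟩ := ne_one_iff.1 hψ
  have hwij : w i - w j ≠ 0 := sub_ne_zero.2 hij
  set c := x / (w i - w j)
  let χ : AddChar (ι → K) R :=
    ψ.compAddMonoidHom (AddMonoidHom.mk' (w ⬝ᵥ ·) (dotProduct_add w))
  refine χ.sum_eq_zero_of_add_mem_iff (g := Pi.single i c - Pi.single j c) (fun a => ?_) ?_
  · simp [Finset.sum_add_distrib, Finset.sum_sub_distrib]
  · simpa [χ, dotProduct_sub, c, ← sub_mul, mul_div_cancel₀ _ hwij] using hx

end AddChar

section Evaluation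

variable {K R ι : Type*} [CommRing K] [CommRing R] [Fintype ι] (ψ : AddChar K R)

lemma eval_addChar_comp (f : MvPolynomial ι R) (a : ι → K) :
    eval (fun i => ψ (a i)) f =
      ∑ v ∈ f.support, coeff v f * ψ ((fun i => (v i : K)) ⬝ᵥ a) := by
  rw [eval_eq']
  refine Finset.sum_congr rfl fun v _ => ?_
  simp only [dotProduct, ψ.map_sum_eq_prod, ← nsmul_eq_mul, AddChar.map_nsmul_eq_pow]

lemma sum_addChar_mul_eval_eq_coeff_mul_card (f : MvPolynomial ι R) (u : ι →₀ ℕ)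
    (A : Finset (ι → K))
    (hA : ∀ v ∈ f.support, v ≠ u → ∑ a ∈ A, ψ ((fun i => (v i : K) - u i) ⬝ᵥ a) = 0) :
    ∑ a ∈ A, ψ (-((fun i => (u i : K)) ⬝ᵥ a)) * eval (fun i => ψ (a i)) f =
      coeff u f * #A := by
  have hmul (v : ι →₀ ℕ) (a : ι → K) :
      ψ (-((fun i => (u i : K)) ⬝ᵥ a)) * ψ ((fun i => (v i : K)) ⬝ᵥ a) =
        ψ ((fun i => (v i : K) - u i) ⬝ᵥ a) := by
    rw [← AddChar.map_add_eq_mul, neg_add_eq_sub, ← sub_dotProduct]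
    rfl
  simp_rw [eval_addChar_comp, Finset.mul_sum, mul_left_comm _ (coeff _ f), hmul]
  rw [Finset.sum_comm, Finset.sum_eq_single u
    (fun v hv hvu => by rw [← Finset.mul_sum, hA v hv hvu, mul_zero])
    (fun hu => by simp [notMem_support_iff.1 hu])]
  simp [mul_comm]

end Evaluation

lemma le_of_natCast_eq_natCast_of_lt {p a b : ℕ} (ha : a < p) (h : (b : ZMod p) = a) :
    a ≤ b := by
  rw [ZMod.natCast_eq_natCast_iff', Nat.mod_eq_of_lt ha] at h
  exact h ▸ Nat.mod_le b p

/-- Summed over the coordinates of `u` and `v ≡ u + k`, this reads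
`(p - 1) (deg v - deg u) ≥ k (n (p - 1) - p deg u)`. The case `a + k ≥ p`, where `b` may drop
below `a`, rests on `p - 1 ≤ k (p - k)`. -/
lemma val_mul_sub_one_le_of_natCast_eq_add {p a b : ℕ} [NeZero p] {k : ZMod p} (ha : a < p)
    (hb : (b : ZMod p) = a + k) :
    (k.val * (p - 1) : ℤ) ≤ (p - 1) * (b - a) + k.val * p * a := by
  have hkp := k.val_lt
  rw [← ZMod.natCast_zmod_val k, ← Nat.cast_add, ZMod.natCast_eq_natCast_iff'] at hb
  have hbmod := Nat.mod_le b p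
  have hp : (1 : ℤ) ≤ p := by exact_mod_cast NeZero.one_le
  have hkpa : (0 : ℤ) ≤ k.val * p * a := by positivity
  by_cases hwrap : a + k.val < p
  · rw [Nat.mod_eq_of_lt hwrap] at hb
    have hab : (a : ℤ) + k.val ≤ b := by exact_mod_cast hb ▸ hbmod
    nlinarith [mul_nonneg (sub_nonneg.2 hp) (sub_nonneg.2 hab)]
  · have hmod : (a + k.val) % p = a + k.val - p := by
      rw [Nat.mod_eq_sub_mod (not_lt.1 hwrap), Nat.mod_eq_of_lt (by omega)]
    have hab : (a : ℤ) + k.val - p ≤ b := by omega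
    have hak : (p : ℤ) ≤ a + k.val := by exact_mod_cast not_lt.1 hwrap
    have hk1 : (1 : ℤ) ≤ k.val := by omega
    have hkp' : (k.val : ℤ) + 1 ≤ p := by exact_mod_cast hkp
    have hkp0 : (0 : ℤ) ≤ k.val * p := by positivity
    nlinarith [mul_nonneg (sub_nonneg.2 hp) (sub_nonneg.2 hab),
      mul_nonneg hkp0 (sub_nonneg.2 hak),
      mul_nonneg (Nat.cast_nonneg (α := ℤ) p) (mul_nonneg (sub_nonneg.2 hk1) (sub_nonneg.2 hkp'))]

lemma Finsupp.eq_of_natCast_eq_add_const {ι : Type*} [Fintype ι] {p : ℕ} [NeZero p]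
    {u v : ι →₀ ℕ} (hu : ∀ i, u i < p) (hdeg : p * u.degree < Fintype.card ι * (p - 1))
    (hvu : v.degree ≤ u.degree) {k : ZMod p} (hk : ∀ i, (v i : ZMod p) = u i + k) : v = u := by
  rw [Finsupp.degree_eq_sum, Finsupp.degree_eq_sum] at *
  have hk0 : k = 0 := by
    by_contra hk0
    have hsum := Finset.sum_le_sum fun i (_ : i ∈ univ) =>
      val_mul_sub_one_le_of_natCast_eq_add (hu i) (hk i)
    simp only [Finset.sum_add_distrib, ← Finset.mul_sum, Finset.sum_sub_distrib,
      Finset.sum_const, card_univ, nsmul_eq_mul] at hsum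
    have hk1 : 1 ≤ k.val := Nat.one_le_iff_ne_zero.2 ((ZMod.val_ne_zero k).2 hk0)
    have hp : 1 ≤ p := NeZero.one_le
    zify [hp] at hdeg hvu hk1
    nlinarith
  subst hk0
  have hle (i : ι) : u i ≤ v i := le_of_natCast_eq_natCast_of_lt (hu i) (by simpa using hk i)
  have hsum : ∑ i, u i = ∑ i, v i := le_antisymm (Finset.sum_le_sum fun i _ => hle i) hvu
  ext i
  exact ((Finset.sum_eq_sum_iff_of_le fun i _ => hle i).1 hsum i (mem_univ i)).symm

lemma DegCompatible.degree_le_of_isLeadingMonomial {σ F : Type*} [CommSemiring F]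
    {m : MonomialOrder σ} (hm : DegCompatible m) {f : MvPolynomial σ F} {u v : σ →₀ ℕ}
    (hu : IsLeadingMonomial m f u) (hv : v ∈ f.support) : v.degree ≤ u.degree :=
  not_lt.1 fun h => (hm u v h).not_ge (hu.2 v hv)

namespace ZMod

variable {p : ℕ}

lemma stdAddChar_ne_one [Fact (1 < p)] : stdAddChar (N := p) ≠ 1 :=
  AddChar.ne_one_iff.2 ⟨1, by
    rw [← (stdAddChar (N := p)).map_zero_eq_one]
    exact injective_stdAddChar.ne one_ne_zero⟩

lemma stdAddChar_pow_eq_one [NeZero p] (x : ZMod p) : stdAddChar x ^ p = 1 := by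
  rw [← AddChar.map_nsmul_eq_pow, nsmul_eq_mul, natCast_self, zero_mul, AddChar.map_zero_eq_one]

lemma prod_stdAddChar_eq_exp_pow [NeZero p] {ι : Type*} [Fintype ι] {a : ι → ZMod p} {t : ℕ}
    (ha : ∑ i, a i = t) :
    ∏ i, stdAddChar (a i) = Complex.exp (2 * Real.pi * Complex.I / p) ^ t := by
  rw [← AddChar.map_sum_eq_prod, ha, stdAddChar_apply, toCircle_natCast, ← Complex.exp_nat_mul]
  ring_nf

end ZMod

theorem stmt14_general (p n t : ℕ) (hp : p.Prime)
    (m : MonomialOrder (Fin n)) (hm : DegCompatible m)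
    (u : Fin n →₀ ℕ) (hu : ∀ i, u i ≤ p - 1)
    (hdeg : p * u.degree < n * (p - 1)) :
    IsStandard m
      {x : Fin n → ℂ | (∀ i, x i ^ p = 1) ∧
        ∏ i, x i = Complex.exp (2 * Real.pi * Complex.I / p) ^ t} u := by
  have := Fact.mk hp
  rintro ⟨f, hf, hlead⟩
  obtain ⟨i₀⟩ : Nonempty (Fin n) := ⟨⟨0, Nat.pos_of_ne_zero (by rintro rfl; simp at hdeg)⟩⟩
  set A := univ.filter fun a : Fin n → ZMod p => ∑ i, a i = t
  have hvanish : ∑ a ∈ A, ZMod.stdAddChar (-((fun i => (u i : ZMod p)) ⬝ᵥ a)) *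
      eval (fun i => ZMod.stdAddChar (a i)) f = 0 :=
    Finset.sum_eq_zero fun a ha => by
      rw [hf _ ⟨fun i => ZMod.stdAddChar_pow_eq_one _,
        ZMod.prod_stdAddChar_eq_exp_pow (mem_filter.1 ha).2⟩, mul_zero]
  rw [sum_addChar_mul_eval_eq_coeff_mul_card _ f u A fun v hv hvu => ?_] at hvanish
  · have hA : A.Nonempty := ⟨Pi.single i₀ t, by simp [A]⟩
    exact mul_ne_zero (mem_support_iff.1 hlead.1) (Nat.cast_ne_zero.2 hA.card_pos.ne') hvanish
  · obtain ⟨i, j, hij⟩ : ∃ i j, (v i : ZMod p) - u i ≠ v j - u j := by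
      by_contra! hconst
      refine hvu (Finsupp.eq_of_natCast_eq_add_const (p := p)
        (fun i => Nat.lt_of_le_pred hp.pos (hu i)) (by simpa using hdeg)
        (hm.degree_le_of_isLeadingMonomial hlead hv) (k := (v i₀ : ZMod p) - u i₀) fun i => ?_)
      rw [← hconst i i₀]
      ring
    exact AddChar.sum_hyperplane_dotProduct_eq_zero ZMod.stdAddChar_ne_one
      (w := fun i => (v i : ZMod p) - u i) hij t

/-- Every monomial with all exponents at most `p-1` and total degree less than `n(p-1)/p`
is a standard monomial of `I(B_t)` for any degree-compatible term order, where `B_t` is the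
set of vectors of `p`-th roots of unity with coordinate product `ω^t`. -/
theorem stmt14 (p n t : ℕ) (hp : p.Prime) (hpn : p ∣ n) (hn : 0 < n) (ht : t ≤ p - 1)
    (m : MonomialOrder (Fin n)) (hm : DegCompatible m)
    (u : Fin n →₀ ℕ) (hu : ∀ i, u i ≤ p - 1)
    (hdeg : p * u.degree < n * (p - 1)) :
    IsStandard m
      {x : Fin n → ℂ | (∀ i, x i ^ p = 1) ∧
        ∏ i, x i = Complex.exp (2 * Real.pi * Complex.I / p) ^ t} u :=
  stmt14_general p n t hp m hm u hu hdeg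
end

section
/- Let p be a prime dividing n, 0 ≤ t ≤ p-1, B_t = {x ∈ {1,ω,...,ω^{p-1}}^n : x_1⋯x_n = ω^t} where ω = e^{2πi/p}, and q ∈ B \ B_t (where B = {1,ω,...,ω^{p-1}}^n). If y is the unique monomial in Sm(≺_deg, B_t ∪ {q}) \ Sm(≺_deg, B_t), then deg(y) ≥ n(p-1)/p. -/
open MvPolynomial

/-- `m` is the deglex order: `u ≺ v` iff `deg u < deg v`, or the degrees agree and `u` is
lexicographically smaller than `v` (smaller at the first index where they differ,
so that `x_n ≺ … ≺ x_1`). -/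
def IsDegLex {n : ℕ} (m : MonomialOrder (Fin n)) : Prop :=
  ∀ u v : Fin n →₀ ℕ,
    (m.toSyn u < m.toSyn v) ↔
      (u.degree < v.degree ∨
        (u.degree = v.degree ∧ ∃ i : Fin n, u i < v i ∧ ∀ j : Fin n, j < i → u j = v j))

/-!
Reducing exponents modulo `p` maps `K[X_σ]` onto the group algebra `K[(ℤ/p)^σ]`, and on the grid
`μ_p^σ` a polynomial is determined by its image there (combinatorial Nullstellensatz applied to
representatives with exponents `< p`). If `f` vanishes on the fiber `∏ xᵢ = w` and has leading
monomial `y`, then `f · ∑ₖ (w⁻¹ ∏ Xᵢ)ᵏ` vanishes on the whole grid, which yields a linear relation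
between the class coefficients of `f` along `y - k·𝟙`. As `y` is also standard for a subset of the
grid, its exponents are `< p`, so its class coefficient is just the coefficient of `y`; hence some
class `y + d·𝟙` with `0 < d < p` contains a monomial `u` of `f`, and `deg u ≤ deg y`. Counting the
coordinates where `yᵢ + d` wraps around `p` gives `n (p - 1) ≤ p deg y`.
-/

section StandardMonomials

variable {σ K : Type*}

def MonomialOrder.IsGraded (m : MonomialOrder σ) : Prop :=
  ∀ u v : σ →₀ ℕ, u.degree < v.degree → m.toSyn u < m.toSyn v

theorem IsDegLex.isGraded {n : ℕ} {m : MonomialOrder (Fin n)} (hm : IsDegLex m) : m.IsGraded :=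
  fun u v h => (hm u v).2 (.inl h)

theorem MonomialOrder.IsGraded.degree_le {m : MonomialOrder σ} (hm : m.IsGraded) [CommSemiring K]
    {f : MvPolynomial σ K} {y : σ →₀ ℕ} (hy : IsLeadingMonomial m f y) {u : σ →₀ ℕ}
    (hu : u ∈ f.support) : u.degree ≤ y.degree :=
  not_lt.1 fun h => (hy.2 u hu).not_gt (hm y u h)

theorem isLeadingMonomial_degree [CommSemiring K] (m : MonomialOrder σ) {f : MvPolynomial σ K}
    (hf : f ≠ 0) : IsLeadingMonomial m f (m.degree f) :=
  ⟨m.degree_mem_support hf, fun _ hv => m.le_degree hv⟩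

/-- `X^y - X^(y - p e_i)` vanishes on `μ_p^σ`, so a standard monomial has exponents `< p`. -/
theorem IsStandard.apply_lt [CommRing K] [Nontrivial K] {m : MonomialOrder σ} (hm : m.IsGraded)
    {p : ℕ} (hp : 0 < p) {S : Set (σ → K)} (hS : ∀ x ∈ S, ∀ i, x i ^ p = 1) {y : σ →₀ ℕ}
    (hy : IsStandard m S y) (i : σ) : y i < p := by
  by_contra! hyi
  set u := y - Finsupp.single i p
  have hyu : y = u + Finsupp.single i p := by
    ext j
    by_cases hj : j = i
    · subst hj; simp [u]; omega
    · simp [u, Finsupp.single_eq_of_ne hj]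
  have hlt : m.toSyn u < m.toSyn y := hm u y (by simp [hyu, hp])
  have hdeg : m.degree (monomial y (1 : K) - monomial u 1) = y := by
    classical
    rw [m.degree_sub_of_lt] <;> simp [m.degree_monomial, hlt]
  refine hy ⟨_, fun x hx => ?_, hdeg ▸ isLeadingMonomial_degree m fun h => ?_⟩
  · rw [hyu, monomial_add_single]
    simp [hS x hx i]
  · exact hlt.ne' (congrArg m.toSyn (monomial_left_injective one_ne_zero (sub_eq_zero.1 h)))

end StandardMonomials

/-- The set `B_t` of the paper is `prodFiber (Fin n) p (ω ^ t)`. -/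
def prodFiber (σ : Type*) [Fintype σ] {K : Type*} [CommMonoid K] (p : ℕ) (w : K) : Set (σ → K) :=
  {x | (∀ i, x i ^ p = 1) ∧ ∏ i, x i = w}

section FoldExponents

variable {σ K : Type*} (p : ℕ)

noncomputable def exponentClass : (σ →₀ ℕ) →+ (σ → ZMod p) :=
  (AddMonoidHom.compLeft (Nat.castAddMonoidHom (ZMod p)) σ).comp Finsupp.coeFnAddHom

@[simp]
theorem exponentClass_apply (u : σ →₀ ℕ) (i : σ) : exponentClass p u i = u i := rfl

noncomputable def foldExponents [CommSemiring K] :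
    MvPolynomial σ K →+* AddMonoidAlgebra K (σ → ZMod p) :=
  AddMonoidAlgebra.mapDomainRingHom K (exponentClass p)

theorem foldExponents_monomial [CommSemiring K] (u : σ →₀ ℕ) (a : K) :
    foldExponents p (monomial u a) = AddMonoidAlgebra.single (exponentClass p u) a :=
  AddMonoidAlgebra.mapDomain_single

theorem eval_mapDomain [Fintype σ] [CommSemiring K] {M : Type*} (x : σ → K) (g : M → σ →₀ ℕ)
    (F : AddMonoidAlgebra K M) :
    eval x (AddMonoidAlgebra.mapDomain g F : MvPolynomial σ K) =
      F.coeff.sum fun c a => a * ∏ i, x i ^ g c i := by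
  rw [eval_eq']
  unfold MvPolynomial.support MvPolynomial.coeff
  rw [AddMonoidAlgebra.coeff_mapDomain]
  exact Finsupp.sum_mapDomain_index (f := g) (s := F.coeff) (h := fun u a => a * ∏ i, x i ^ u i)
    (fun _ => zero_mul _) (fun _ _ _ => add_mul _ _ _)

theorem eval_eq_sum_coeff_foldExponents [Fintype σ] [CommSemiring K] {x : σ → K}
    (hx : ∀ i, x i ^ p = 1) (f : MvPolynomial σ K) :
    eval x f = (foldExponents p f).coeff.sum fun c a => a * ∏ i, x i ^ (c i).val := by
  rw [eval_eq', foldExponents, AddMonoidAlgebra.mapDomainRingHom_apply,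
    AddMonoidAlgebra.coeff_mapDomain,
    Finsupp.sum_mapDomain_index (fun _ => zero_mul _) (fun _ _ _ => add_mul _ _ _)]
  refine Finset.sum_congr rfl fun u _ => ?_
  simp only [exponentClass_apply, ZMod.val_natCast, ← pow_eq_pow_mod _ (hx _)]
  rfl

noncomputable def classRep [Fintype σ] (c : σ → ZMod p) : σ →₀ ℕ :=
  Finsupp.equivFunOnFinite.symm fun i => (c i).val

theorem classRep_injective [Fintype σ] [NeZero p] : Function.Injective (classRep (σ := σ) p) :=
  fun _ _ h => funext fun i => ZMod.val_injective p (DFunLike.congr_fun h i)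

theorem foldExponents_eq_zero_of_eval_eq_zero [Fintype σ] [CommRing K] [IsDomain K] [NeZero p]
    {ω : K} (hω : IsPrimitiveRoot ω p) {f : MvPolynomial σ K}
    (hf : ∀ x : σ → K, (∀ i, x i ^ p = 1) → eval x f = 0) : foldExponents p f = 0 := by
  classical
  set F := foldExponents p f
  let P : MvPolynomial σ K := AddMonoidAlgebra.mapDomain (classRep p) F
  have hP : P = 0 := by
    refine eq_zero_of_eval_zero_at_prod_finset P (fun _ => Polynomial.nthRootsFinset p 1)
      (fun i => ?_) (fun x hx => ?_)
    · rw [hω.card_nthRootsFinset, degreeOf_lt_iff (NeZero.pos p)]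
      intro u hu
      obtain ⟨c, -, rfl⟩ := Finset.mem_image.1 (Finsupp.mapDomain_support hu)
      exact ZMod.val_lt (c i)
    · have hx' : ∀ i, x i ^ p = 1 := fun i =>
        (Polynomial.mem_nthRootsFinset (NeZero.pos p) 1).1 (hx i)
      calc eval x P = F.coeff.sum fun c a => a * ∏ i, x i ^ (c i).val := eval_mapDomain x _ F
        _ = 0 := by rw [← eval_eq_sum_coeff_foldExponents p hx', hf x hx']
  ext c
  have := congrArg (coeff (classRep p c)) hP
  unfold MvPolynomial.coeff at this
  rwa [AddMonoidAlgebra.coeff_mapDomain, Finsupp.mapDomain_apply (classRep_injective p)] at this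

theorem exists_mem_support_of_coeff_foldExponents_ne_zero [CommSemiring K]
    {f : MvPolynomial σ K} {c : σ → ZMod p} (hc : (foldExponents p f).coeff c ≠ 0) :
    ∃ u ∈ f.support, exponentClass p u = c := by
  classical
  rw [foldExponents, AddMonoidAlgebra.mapDomainRingHom_apply,
    AddMonoidAlgebra.coeff_mapDomain, ← Finsupp.mem_support_iff] at hc
  obtain ⟨u, hu, rfl⟩ := Finset.mem_image.1 (Finsupp.mapDomain_support hc)
  exact ⟨u, hu, rfl⟩

theorem eq_of_exponentClass_eq [Fintype σ] {u y : σ →₀ ℕ} (hy : ∀ i, y i < p)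
    (h : exponentClass p u = exponentClass p y) (hdeg : u.degree ≤ y.degree) : u = y := by
  have hle : ∀ i ∈ Finset.univ, y i ≤ u i := fun i _ => by
    have := (ZMod.natCast_eq_natCast_iff' (u i) (y i) p).1 (congrFun h i)
    rw [Nat.mod_eq_of_lt (hy i)] at this
    exact this ▸ Nat.mod_le _ _
  rw [Finsupp.degree_eq_sum, Finsupp.degree_eq_sum] at hdeg
  ext i
  exact ((Finset.sum_eq_sum_iff_of_le hle).1 (le_antisymm (Finset.sum_le_sum hle) hdeg) i
    (Finset.mem_univ i)).symm

theorem coeff_foldExponents_exponentClass [Fintype σ] [CommSemiring K] {f : MvPolynomial σ K}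
    {y : σ →₀ ℕ} (hy : ∀ i, y i < p) (hdeg : ∀ u ∈ f.support, u.degree ≤ y.degree) :
    (foldExponents p f).coeff (exponentClass p y) = coeff y f := by
  classical
  rw [foldExponents, AddMonoidAlgebra.mapDomainRingHom_apply,
    AddMonoidAlgebra.coeff_mapDomain, Finsupp.mapDomain_apply_eq_sum]
  refine Finset.sum_eq_single y (fun u hu huy => ?_) fun hy' => ?_
  · obtain ⟨hu, hclass⟩ := Finset.mem_filter.1 hu
    exact absurd (eq_of_exponentClass_eq p hy hclass (hdeg u hu)) huy
  · simpa using hy'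

/-- Multiplying by `∑ₖ (w⁻¹ ∏ Xᵢ)ᵏ`, which vanishes on `μ_p^σ` off the fiber, turns a polynomial
vanishing on the fiber into one vanishing on all of `μ_p^σ`. -/
theorem sum_coeff_foldExponents_sub_mul_pow_eq_zero [Fintype σ] [Field K] [NeZero p] {ω : K}
    (hω : IsPrimitiveRoot ω p) {w : K} (hw : w ^ p = 1) {f : MvPolynomial σ K}
    (hf : f ∈ vanishingOn (prodFiber σ p w)) (c : σ → ZMod p) :
    ∑ k ∈ Finset.range p, (foldExponents p f).coeff (c - k) * w⁻¹ ^ k = 0 := by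
  let g : MvPolynomial σ K :=
    ∑ k ∈ Finset.range p, monomial (Finsupp.equivFunOnFinite.symm fun _ => k) (w⁻¹ ^ k)
  have hfg : foldExponents p (f * g) = 0 := by
    refine foldExponents_eq_zero_of_eval_eq_zero p hω fun x hx => ?_
    by_cases hxw : ∏ i, x i = w
    · simp [hf x ⟨hx, hxw⟩]
    · have hg : eval x g = ∑ k ∈ Finset.range p, (w⁻¹ * ∏ i, x i) ^ k := by
        simp [g, eval_monomial, Finsupp.prod_fintype, mul_pow, Finset.prod_pow]
      have hz : w⁻¹ * ∏ i, x i ≠ 1 := by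
        rw [Ne, inv_mul_eq_one₀ (by rintro rfl; simp [NeZero.ne p] at hw)]
        exact Ne.symm hxw
      have hzp : (w⁻¹ * ∏ i, x i) ^ p = 1 := by
        simp [mul_pow, inv_pow, hw, ← Finset.prod_pow, hx]
      rw [map_mul, hg, geom_sum_eq hz, hzp, sub_self, zero_div, mul_zero]
  have hg : foldExponents p g =
      ∑ k ∈ Finset.range p, AddMonoidAlgebra.single (k : σ → ZMod p) (w⁻¹ ^ k) := by
    simp only [g, map_sum, foldExponents_monomial]
    congr! with k
  have := congrArg (AddMonoidAlgebra.coeff · c) hfg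
  simpa [hg, Finset.mul_sum, AddMonoidAlgebra.coeff_sum, sub_eq_add_neg] using this

end FoldExponents

/-- Shifting every coordinate of `y ∈ [0, p)^ι` by `d` modulo `p` wraps around on a set `S`;
if the total does not grow then `#ι d ≤ p #S`, while `y ≥ p - d` on `S`, and
`p - 1 ≤ d (p - d)` combines the two. -/
theorem card_mul_pred_le_mul_sum {ι : Type*} [Fintype ι] {p d : ℕ} {y : ι → ℕ}
    (hy : ∀ i, y i < p) (hd : 0 < d) (hdp : d < p) (h : ∑ i, (y i + d) % p ≤ ∑ i, y i) :
    Fintype.card ι * (p - 1) ≤ p * ∑ i, y i := by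
  classical
  have hcoord : ∀ i, (y i + d) % p + p * (if p ≤ y i + d then 1 else 0) = y i + d := fun i => by
    have := hy i
    split_ifs with h
    · rw [Nat.mod_eq_sub_mod h, Nat.mod_eq_of_lt (by omega)]
      omega
    · rw [Nat.mod_eq_of_lt (by omega), mul_zero, add_zero]
  set S := Finset.univ.filter fun i => p ≤ y i + d
  have hwrap : ∑ i, (y i + d) % p + p * S.card = ∑ i, y i + Fintype.card ι * d := by
    rw [Finset.card_filter, Finset.mul_sum, ← Finset.sum_add_distrib]
    simp only [hcoord, Finset.sum_add_distrib, Finset.sum_const,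
      Finset.card_univ, smul_eq_mul, mul_comm]
  have hS : S.card * (p - d) ≤ ∑ i, y i := calc
    S.card * (p - d) = ∑ _i ∈ S, (p - d) := by rw [Finset.sum_const, smul_eq_mul]
    _ ≤ ∑ i ∈ S, y i := Finset.sum_le_sum fun i hi => by
      have := (Finset.mem_filter.1 hi).2
      omega
    _ ≤ ∑ i, y i := Finset.sum_le_sum_of_subset (Finset.filter_subset _ _)
  have hpd : p - 1 ≤ d * (p - d) := by
    obtain ⟨e, rfl⟩ : ∃ e, p = d + e + 1 := ⟨p - d - 1, by omega⟩
    have := Nat.mul_le_mul_right e hd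
    rw [show d + e + 1 - d = e + 1 by omega, mul_add_one]
    omega
  calc Fintype.card ι * (p - 1) ≤ Fintype.card ι * d * (p - d) := by
        rw [mul_assoc]; exact Nat.mul_le_mul_left _ hpd
    _ ≤ p * S.card * (p - d) := Nat.mul_le_mul_right _ (by omega)
    _ ≤ p * ∑ i, y i := by rw [mul_assoc]; exact Nat.mul_le_mul_left _ hS

theorem card_mul_pred_le_mul_degree_of_not_isStandard {σ K : Type*} [Fintype σ] [Field K] {p : ℕ}
    [NeZero p] {ω : K} (hω : IsPrimitiveRoot ω p) {w : K} (hw : w ^ p = 1)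
    {m : MonomialOrder σ} (hm : m.IsGraded) {y : σ →₀ ℕ} (hy : ∀ i, y i < p)
    (hy' : ¬ IsStandard m (prodFiber σ p w) y) :
    Fintype.card σ * (p - 1) ≤ p * y.degree := by
  obtain ⟨f, hf, hfy⟩ := not_not.1 hy'
  have hdeg : ∀ u ∈ f.support, u.degree ≤ y.degree := fun _ => hm.degree_le hfy
  have hrel := sum_coeff_foldExponents_sub_mul_pow_eq_zero p hω hw hf (exponentClass p y)
  rw [← Finset.add_sum_erase _ _ (Finset.mem_range.2 (NeZero.pos p)), Nat.cast_zero, sub_zero,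
    pow_zero, mul_one, coeff_foldExponents_exponentClass p hy hdeg] at hrel
  obtain ⟨k, hk, hne⟩ := Finset.exists_ne_zero_of_sum_ne_zero fun h =>
    mem_support_iff.1 hfy.1 (by rwa [h, add_zero] at hrel)
  obtain ⟨hk0, hkp⟩ := Finset.mem_erase.1 hk
  have hkp : k < p := Finset.mem_range.1 hkp
  obtain ⟨u, hu, hclass⟩ :=
    exists_mem_support_of_coeff_foldExponents_ne_zero p (left_ne_zero_of_mul hne)
  have hmod : ∀ i, (y i + (p - k)) % p = u i % p := fun i => by
    refine (ZMod.natCast_eq_natCast_iff' _ _ p).1 ?_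
    rw [← exponentClass_apply, hclass]
    simp [Nat.cast_sub hkp.le, sub_eq_add_neg]
  rw [Finsupp.degree_eq_sum]
  refine card_mul_pred_le_mul_sum (d := p - k) hy (by omega) (by omega) ?_
  calc ∑ i, (y i + (p - k)) % p = ∑ i, u i % p := Finset.sum_congr rfl fun i _ => hmod i
    _ ≤ ∑ i, u i := Finset.sum_le_sum fun i _ => Nat.mod_le _ _
    _ = u.degree := (Finsupp.degree_eq_sum u).symm
    _ ≤ y.degree := hdeg u hu
    _ = ∑ i, y i := Finsupp.degree_eq_sum y

theorem stmt15_general (p n t : ℕ) (hp : p.Prime)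
    (m : MonomialOrder (Fin n)) (hm : IsDegLex m)
    (q : Fin n → ℂ) (hq : ∀ i, q i ^ p = 1)
    (y : Fin n →₀ ℕ)
    (hy : IsStandard m
      ({x : Fin n → ℂ | (∀ i, x i ^ p = 1) ∧
        ∏ i, x i = Complex.exp (2 * Real.pi * Complex.I / p) ^ t} ∪ {q}) y)
    (hy' : ¬ IsStandard m
      {x : Fin n → ℂ | (∀ i, x i ^ p = 1) ∧
        ∏ i, x i = Complex.exp (2 * Real.pi * Complex.I / p) ^ t} y) :
    n * (p - 1) ≤ p * y.degree := by
  have : NeZero p := ⟨hp.ne_zero⟩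
  have hω := Complex.isPrimitiveRoot_exp p hp.ne_zero
  have hw : (Complex.exp (2 * Real.pi * Complex.I / p) ^ t) ^ p = 1 := by
    rw [← pow_mul, pow_mul', hω.pow_eq_one, one_pow]
  have hroots : ∀ x ∈ {x : Fin n → ℂ | (∀ i, x i ^ p = 1) ∧
      ∏ i, x i = Complex.exp (2 * Real.pi * Complex.I / p) ^ t} ∪ {q}, ∀ i, x i ^ p = 1 := by
    rintro x (hx | rfl)
    exacts [hx.1, hq]
  have := card_mul_pred_le_mul_degree_of_not_isStandard hω hw hm.isGraded
    (hy.apply_lt hm.isGraded hp.pos hroots) hy'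
  rwa [Fintype.card_fin] at this

/-- If `q ∈ B \ B_t` and `y` is the unique monomial in
`Sm(≺_deg, B_t ∪ {q}) \ Sm(≺_deg, B_t)`, then `deg y ≥ n(p-1)/p`. -/
theorem stmt15 (p n t : ℕ) (hp : p.Prime) (hpn : p ∣ n) (hn : 0 < n) (ht : t ≤ p - 1)
    (m : MonomialOrder (Fin n)) (hm : IsDegLex m)
    (q : Fin n → ℂ) (hq : ∀ i, q i ^ p = 1)
    (hq' : ∏ i, q i ≠ Complex.exp (2 * Real.pi * Complex.I / p) ^ t)
    (y : Fin n →₀ ℕ)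
    (hy : IsStandard m
      ({x : Fin n → ℂ | (∀ i, x i ^ p = 1) ∧
        ∏ i, x i = Complex.exp (2 * Real.pi * Complex.I / p) ^ t} ∪ {q}) y)
    (hy' : ¬ IsStandard m
      {x : Fin n → ℂ | (∀ i, x i ^ p = 1) ∧
        ∏ i, x i = Complex.exp (2 * Real.pi * Complex.I / p) ^ t} y) :
    n * (p - 1) ≤ p * y.degree :=
  stmt15_general p n t hp m hm q hq y hy hy'
end

section
/- Let p be a prime and V ⊆ F_p^{4p} the set of characteristic vectors of 2p-element subsets of [4p]. Let P ∈ F_p[x_1,...,x_{4p}] vanish on V, and let C ⊆ [4p] with |C| = 3p be such that P(v_C) ≠ 0, where v_C is the characteristic vector of C. Then deg(P) ≥ p. -/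
/-!
Fix `D ⊆ C` with `|D| = k + 1 - p` and sum `P(v_B)` over the `k`-sets `D ⊆ B ⊆ C`; the sum is `0`.
Expanding in monomials, a monomial whose support `S` has fewer than `p` elements is counted once
for each such `B ⊇ D ∪ S`, i.e. `binom(p + m, m)` times with `m = k - |D ∪ S| < p`, which is `1` in
`ZMod p` by Lucas' theorem, provided `S ⊆ C`, and never otherwise. So if `deg P < p` the sum
equals `P(v_C)`.
-/

open MvPolynomial Finset

theorem Choose.cast_add_choose_eq_one {p m : ℕ} [Fact p.Prime] (hm : m < p) :
    ((p + m).choose m : ZMod p) = 1 := by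
  have h := choose_modEq_choose_mod_mul_choose_div_nat (n := p + m) (k := m) (p := p)
  rw [← ZMod.natCast_eq_natCast_iff] at h
  rw [h, Nat.add_mod_left, Nat.mod_eq_of_lt hm, Nat.div_eq_of_lt hm,
    Nat.add_div_left _ (by omega), Nat.div_eq_of_lt hm]
  simp

theorem Finset.cast_card_filter_powersetCard_subset_eq_one {ι : Type*} [DecidableEq ι]
    {p k : ℕ} [Fact p.Prime] {F C : Finset ι} (hC : #C = p + k) (hFC : F ⊆ C) (hFk : #F ≤ k)
    (hkF : k < p + #F) : (#{B ∈ C.powersetCard k | F ⊆ B} : ZMod p) = 1 := by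
  rw [card_filter_powersetCard_subset F C k hFC hFk, hC,
    show p + k - #F = p + (k - #F) by omega]
  exact Choose.cast_add_choose_eq_one (by omega)

namespace MvPolynomial

variable {σ R : Type*} [CommSemiring R]

theorem card_support_le_totalDegree {P : MvPolynomial σ R} {d : σ →₀ ℕ} (hd : d ∈ P.support) :
    #d.support ≤ P.totalDegree := by
  classical
  rw [totalDegree_eq, ← Finsupp.toFinset_toMultiset]
  exact (Multiset.toFinset_card_le _).trans
    (le_sup (f := fun m => Multiset.card (Finsupp.toMultiset m)) hd)

variable [DecidableEq σ]

theorem eval_indicator (T : Finset σ) (P : MvPolynomial σ R) :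
    eval (fun i => if i ∈ T then (1 : R) else 0) P
      = ∑ d ∈ P.support, if d.support ⊆ T then P.coeff d else 0 := by
  rw [eval_eq]
  refine sum_congr rfl fun d _ => ?_
  split_ifs with h
  · rw [prod_eq_one fun i hi => by rw [if_pos (h hi), one_pow], mul_one]
  · obtain ⟨i, hi, hiT⟩ := not_subset.mp h
    rw [prod_eq_zero hi (by rw [if_neg hiT, zero_pow (Finsupp.mem_support_iff.mp hi)]), mul_zero]

theorem sum_eval_indicator (s : Finset (Finset σ)) (P : MvPolynomial σ R) :
    ∑ B ∈ s, eval (fun i => if i ∈ B then (1 : R) else 0) P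
      = ∑ d ∈ P.support, (#{B ∈ s | d.support ⊆ B} : R) * P.coeff d := by
  simp_rw [eval_indicator]
  rw [sum_comm]
  refine sum_congr rfl fun d _ => ?_
  rw [← sum_filter, sum_const, nsmul_eq_mul]

end MvPolynomial

theorem MvPolynomial.le_totalDegree_of_vanishing_on_card_eq {ι : Type*} [DecidableEq ι] {p k : ℕ}
    [Fact p.Prime] (hpk : p ≤ k + 1) (P : MvPolynomial ι (ZMod p))
    (hvanish : ∀ B : Finset ι, #B = k → eval (fun i => if i ∈ B then (1 : ZMod p) else 0) P = 0)
    (C : Finset ι) (hC : #C = p + k)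
    (hPC : eval (fun i => if i ∈ C then (1 : ZMod p) else 0) P ≠ 0) :
    p ≤ P.totalDegree := by
  by_contra! hdeg
  have hp := (Fact.out : p.Prime).pos
  obtain ⟨D, hDC, hD⟩ := exists_subset_card_eq (s := C) (n := k + 1 - p) (by omega)
  set s := {B ∈ C.powersetCard k | D ⊆ B}
  have hcount : ∀ d ∈ P.support,
      (#{B ∈ s | d.support ⊆ B} : ZMod p) = if d.support ⊆ C then 1 else 0 := by
    intro d hd
    have hsupp := card_support_le_totalDegree hd
    rw [filter_filter]
    simp_rw [← union_subset_iff]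
    split_ifs with hdC
    · apply cast_card_filter_powersetCard_subset_eq_one hC (union_subset hDC hdC)
      · exact (card_union_le _ _).trans (by omega)
      · exact (by omega : k < p + #D).trans_le (by gcongr; exact subset_union_left)
    · rw [card_eq_zero.mpr (filter_eq_empty_iff.mpr fun B hB hDB => ?_), Nat.cast_zero]
      exact hdC ((subset_union_right.trans hDB).trans (mem_powersetCard.mp hB).1)
  have hsum : ∑ B ∈ s, eval (fun i => if i ∈ B then (1 : ZMod p) else 0) P = 0 :=
    sum_eq_zero fun B hB => hvanish B (mem_powersetCard.mp (mem_filter.mp hB).1).2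
  rw [sum_eval_indicator,
    sum_congr rfl fun d hd => by rw [hcount d hd, ite_mul, one_mul, zero_mul],
    ← eval_indicator] at hsum
  exact hPC hsum

/-- If `P ∈ F_p[x_1,…,x_{4p}]` vanishes at the characteristic vectors of all `2p`-element
subsets of `[4p]` but not at the characteristic vector of some `3p`-element set `C`,
then `deg P ≥ p`. -/
theorem stmt17 (p : ℕ) (hp : p.Prime)
    (P : MvPolynomial (Fin (4 * p)) (ZMod p))
    (hvanish : ∀ B : Finset (Fin (4 * p)), B.card = 2 * p →
      eval (fun i => if i ∈ B then (1 : ZMod p) else 0) P = 0)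
    (C : Finset (Fin (4 * p))) (hC : C.card = 3 * p)
    (hPC : eval (fun i => if i ∈ C then (1 : ZMod p) else 0) P ≠ 0) :
    p ≤ P.totalDegree := by
  have := Fact.mk hp
  exact le_totalDegree_of_vanishing_on_card_eq (k := 2 * p) (by omega) P hvanish C (by omega) hPC
end

section
/- Let p be a prime, 0 < t < p, n = 4p, and let H = {s_1 < ... < s_t} ⊆ [n] be such that t is the smallest index j with s_j < 2j. Set H' = H ∪ {2t, 2t+1, ..., n} and define f_{H,d} = Σ_{k=0}^t (-1)^{t-k} C(d-k, t-k) σ_{H',k}, where σ_{H',k} is the k-th elementary symmetric polynomial in the variables x_j, j ∈ H'. Then, working over F_p with d = 2p, f_{H,2p} vanishes at the characteristic vector of every subset D ⊆ [4p] whose size is divisible by p. -/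
open MvPolynomial

/-- The polynomial `f_{H,d} = ∑_{k=0}^t (-1)^{t-k} C(d-k, t-k) σ_{H',k}` over `F_p`,
where `H = {s 0 < … < s (t-1)}` (1-indexed values in `[n]`), `H' = H ∪ {2t, …, n}`,
and `σ_{H',k}` is the `k`-th elementary symmetric polynomial in the variables `x_j`,
`j ∈ H'`. Variables are indexed by `ℕ`, only `x_1, …, x_n` occurring. -/
noncomputable def fHd (p n t d : ℕ) (s : Fin t → ℕ) : MvPolynomial ℕ (ZMod p) :=
  ∑ k ∈ Finset.range (t + 1),
    C ((-1 : ZMod p) ^ (t - k) * ((d - k).choose (t - k) : ZMod p)) *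
      ∑ T ∈ (Finset.image s Finset.univ ∪ Finset.Icc (2 * t) n).powersetCard k,
        ∏ j ∈ T, X j

/-- Evaluation of the `k`-th elementary symmetric polynomial in variables `S` at the
characteristic vector of `D` counts `k`-subsets of `S ∩ D`. -/
lemma aux_eval_esymm (p k : ℕ) (S D : Finset ℕ) :
    eval (fun i => if i ∈ D then (1 : ZMod p) else 0)
      (∑ T ∈ S.powersetCard k, ∏ j ∈ T, (X j : MvPolynomial ℕ (ZMod p)))
      = ((S ∩ D).card.choose k : ZMod p) := by
  rw [map_sum]
  have h1 : ∀ T ∈ S.powersetCard k,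
      eval (fun i => if i ∈ D then (1 : ZMod p) else 0)
        (∏ j ∈ T, (X j : MvPolynomial ℕ (ZMod p)))
        = if T ⊆ D then (1 : ZMod p) else 0 := by
    intro T _
    rw [eval_prod]
    simp only [eval_X]
    by_cases h : T ⊆ D
    · rw [if_pos h]
      exact Finset.prod_eq_one fun j hj => if_pos (h hj)
    · rw [if_neg h]
      obtain ⟨j, hjT, hjD⟩ := Finset.not_subset.mp h
      exact Finset.prod_eq_zero hjT (if_neg hjD)
  rw [Finset.sum_congr rfl h1, Finset.sum_boole]
  rw [← Finset.card_powersetCard]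
  congr 2
  ext T
  simp only [Finset.mem_filter, Finset.mem_powersetCard, Finset.subset_inter_iff]
  tauto

lemma aux_prod (t k : ℕ) (hk : k ≤ t) :
    ∏ i ∈ Finset.range (t - k), (k + i) = (t - 1).descFactorial (t - k) := by
  rw [Nat.descFactorial_eq_prod_range]
  conv_rhs => rw [← Finset.prod_range_reflect]
  apply Finset.prod_congr rfl
  intro i hi
  simp only [Finset.mem_range] at hi
  omega

lemma aux_fact_ne (p j : ℕ) (hp : p.Prime) (hj : j < p) :
    ((Nat.factorial j : ℕ) : ZMod p) ≠ 0 := by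
  rw [Ne, ZMod.natCast_eq_zero_iff]
  intro h
  have := (Nat.Prime.dvd_factorial hp).mp h
  omega

/-- `C(2p-k, t-k) ≡ (-1)^{t-k} C(t-1, t-k) (mod p)` for `k ≤ t < p`. -/
lemma aux_coef (p t k : ℕ) (hp : p.Prime) (ht : 0 < t) (htp : t < p) (hk : k ≤ t) :
    ((2 * p - k).choose (t - k) : ZMod p)
      = (-1) ^ (t - k) * ((t - 1).choose (t - k) : ZMod p) := by
  haveI : Fact p.Prime := ⟨hp⟩
  have hfac := aux_fact_ne p (t - k) hp (by omega)
  apply mul_right_cancel₀ hfac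
  have lhs : ((2 * p - k).choose (t - k) : ZMod p) * ((t - k).factorial : ZMod p)
      = (((2 * p - k).descFactorial (t - k) : ℕ) : ZMod p) := by
    rw [Nat.descFactorial_eq_factorial_mul_choose]
    push_cast
    ring
  rw [lhs, Nat.descFactorial_eq_prod_range, Nat.cast_prod]
  have h2 : ∀ i ∈ Finset.range (t - k),
      ((2 * p - k - i : ℕ) : ZMod p) = (-1) * ((k + i : ℕ) : ZMod p) := by
    intro i hi
    simp only [Finset.mem_range] at hi
    have h1 : (2 * p - k - i : ℕ) = 2 * p - (k + i) := by omega
    have h2 : k + i ≤ 2 * p := by omega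
    rw [h1, Nat.cast_sub h2]
    have : ((2 * p : ℕ) : ZMod p) = 0 := by
      rw [ZMod.natCast_eq_zero_iff]
      exact dvd_mul_left p 2
    rw [this]
    ring
  rw [Finset.prod_congr rfl h2, Finset.prod_mul_distrib, Finset.prod_const,
    Finset.card_range, ← Nat.cast_prod, aux_prod t k hk,
    Nat.descFactorial_eq_factorial_mul_choose]
  push_cast
  ring

/-- If `N = a*p + r` with `r < t < p`, `p` prime, then `C(N, t) ≡ 0 (mod p)`. -/
lemma aux_choose_zero (p t N a r : ℕ) (hp : p.Prime) (htp : t < p)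
    (hr : r < t) (hN : N = a * p + r) :
    ((N.choose t : ℕ) : ZMod p) = 0 := by
  haveI : Fact p.Prime := ⟨hp⟩
  rcases Nat.eq_zero_or_pos a with ha | ha
  · subst ha
    rw [Nat.choose_eq_zero_of_lt (by omega)]
    simp
  · have hfac := aux_fact_ne p t hp htp
    have key : (((N.descFactorial t : ℕ)) : ZMod p) = 0 := by
      rw [Nat.descFactorial_eq_prod_range, Nat.cast_prod]
      apply Finset.prod_eq_zero (Finset.mem_range.mpr hr)
      have : (N - r : ℕ) = a * p := by omega
      rw [this, ZMod.natCast_eq_zero_iff]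
      exact dvd_mul_left p a
    rw [Nat.descFactorial_eq_factorial_mul_choose, Nat.cast_mul] at key
    rcases mul_eq_zero.mp key with h | h
    · exact absurd h hfac
    · exact h

/-- Let `p` be prime, `0 < t < p`, `n = 4p`, and let `H = {s_1 < … < s_t} ⊆ [n]` be such
that `t` is the smallest index `j` with `s_j < 2j`. Then, over `F_p` with `d = 2p`,
`f_{H,2p}` vanishes at the characteristic vector of every subset `D ⊆ [4p]` whose size is
divisible by `p`. -/
theorem stmt18 (p t : ℕ) (hp : p.Prime) (ht : 0 < t) (htp : t < p)
    (s : Fin t → ℕ) (hmono : StrictMono s)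
    (hrange : ∀ j, 1 ≤ s j ∧ s j ≤ 4 * p)
    (hlast : s ⟨t - 1, by omega⟩ < 2 * t)
    (hmin : ∀ j : Fin t, (j : ℕ) + 1 < t → 2 * ((j : ℕ) + 1) ≤ s j)
    (D : Finset ℕ) (hD : D ⊆ Finset.Icc 1 (4 * p)) (hDcard : p ∣ D.card) :
    eval (fun i => if i ∈ D then (1 : ZMod p) else 0) (fHd p (4 * p) t (2 * p) s) = 0 := by
  classical
  set H' := Finset.image s Finset.univ ∪ Finset.Icc (2 * t) (4 * p) with hH'
  set m := (H' ∩ D).card with hm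
  -- Step 1: evaluate
  have heval : eval (fun i => if i ∈ D then (1 : ZMod p) else 0) (fHd p (4 * p) t (2 * p) s)
      = ∑ k ∈ Finset.range (t + 1),
        (-1 : ZMod p) ^ (t - k) * ((2 * p - k).choose (t - k) : ZMod p)
          * (m.choose k : ZMod p) := by
    unfold fHd
    rw [map_sum]
    apply Finset.sum_congr rfl
    intro k _
    rw [map_mul, eval_C, aux_eval_esymm]
  rw [heval]
  -- Step 2: rewrite coefficients mod p
  have hstep2 : ∀ k ∈ Finset.range (t + 1),
      (-1 : ZMod p) ^ (t - k) * ((2 * p - k).choose (t - k) : ZMod p)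
          * (m.choose k : ZMod p)
        = (((t - 1).choose (t - k) * m.choose k : ℕ) : ZMod p) := by
    intro k hk
    simp only [Finset.mem_range] at hk
    rw [aux_coef p t k hp ht htp (by omega)]
    push_cast
    rw [← mul_assoc, ← mul_pow]
    norm_num
  rw [Finset.sum_congr rfl hstep2, ← Nat.cast_sum]
  -- Step 3: Vandermonde
  have hvdm : ∑ k ∈ Finset.range (t + 1), (t - 1).choose (t - k) * m.choose k
      = (t - 1 + m).choose t := by
    rw [Nat.add_choose_eq, Finset.Nat.sum_antidiagonal_eq_sum_range_succ_mk]
    conv_lhs => rw [← Finset.sum_range_reflect]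
    apply Finset.sum_congr rfl
    intro k hk
    simp only [Finset.mem_range] at hk
    have h1 : t - (t + 1 - 1 - k) = k := by omega
    have h2 : t + 1 - 1 - k = t - k := by omega
    rw [h1, h2]
  rw [hvdm]
  -- Step 4: combinatorial bounds on m
  obtain ⟨a, haD⟩ := hDcard
  have haD2 : D.card = a * p := by rw [haD, mul_comm]
  have hmle : m ≤ D.card := Finset.card_le_card Finset.inter_subset_right
  have hDle : D.card ≤ m + (t - 1) := by
    have hsub : D ⊆ (H' ∩ D) ∪ (D \ H') := by
      intro x hx
      by_cases hxH : x ∈ H'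
      · exact Finset.mem_union_left _ (Finset.mem_inter.mpr ⟨hxH, hx⟩)
      · exact Finset.mem_union_right _ (Finset.mem_sdiff.mpr ⟨hx, hxH⟩)
    have h1 : D.card ≤ m + (D \ H').card :=
      (Finset.card_le_card hsub).trans (Finset.card_union_le _ _)
    have h2 : (D \ H').card ≤ t - 1 := by
      have hsub2 : D \ H' ⊆ Finset.Icc 1 (2 * t - 1) \ Finset.image s Finset.univ := by
        intro x hx
        rw [Finset.mem_sdiff] at hx
        obtain ⟨hxD, hxH⟩ := hx
        have hxI := hD hxD
        rw [Finset.mem_Icc] at hxI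
        rw [hH', Finset.mem_union, Finset.mem_Icc] at hxH
        push_neg at hxH
        obtain ⟨hx1, hx2⟩ := hxH
        rw [Finset.mem_sdiff, Finset.mem_Icc]
        refine ⟨⟨hxI.1, ?_⟩, hx1⟩
        by_contra hcon
        have := hx2 (by omega)
        omega
      have himg : Finset.image s Finset.univ ⊆ Finset.Icc 1 (2 * t - 1) := by
        intro x hx
        rw [Finset.mem_image] at hx
        obtain ⟨j, _, rfl⟩ := hx
        rw [Finset.mem_Icc]
        have h1 := (hrange j).1
        have h2 : s j ≤ s ⟨t - 1, by omega⟩ := hmono.monotone (by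
          rw [Fin.le_def]
          simp only
          omega)
        omega
      have hcard : (Finset.Icc 1 (2 * t - 1) \ Finset.image s Finset.univ).card = t - 1 := by
        rw [Finset.card_sdiff_of_subset himg, Nat.card_Icc,
          Finset.card_image_of_injective _ hmono.injective, Finset.card_univ,
          Fintype.card_fin]
        omega
      calc (D \ H').card ≤ _ := Finset.card_le_card hsub2
        _ = t - 1 := hcard
    omega
  -- Step 5: conclude with aux_choose_zero
  have hage : t - 1 + m = a * p + (t - 1 + m - D.card) := by omega
  exact aux_choose_zero p t (t - 1 + m) a (t - 1 + m - D.card) hp htp (by omega) (by omega)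
end
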